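/- Let φ1 be an alternating LTL formula and φ2 any LTL formula. Then φ1 U φ2 ≡ φ2 ∨ (Xφ1 ∧ X(φ1 U φ2)), i.e., for every alphabet Σ and every infinite word w ∈ Σ^ω, w ⊨ φ1 U φ2 if and only if w ⊨ φ2 ∨ (Xφ1 ∧ X(φ1 U φ2)). -/
import Mathlib


/-- Syntax of LTL formulae over atomic propositions `AP`. -/
inductive LTL (AP : Type) : Type
  | tt    : LTL AP
  | atom  : AP → LTL AP
  | not   : LTL AP → LTL AP
  | or    : LTL AP → LTL AP → LTL AP
  | and   : LTL AP → LTL AP → LTL AP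
  | next  : LTL AP → LTL AP
  | untl  : LTL AP → LTL AP → LTL AP

namespace LTL

/-- Derived operator `F` (eventually). -/
def F {AP : Type} (φ : LTL AP) : LTL AP := untl tt φ

/-- Derived operator `G` (always). -/
def G {AP : Type} (φ : LTL AP) : LTL AP := not (F (not φ))

/-- Derived operator `R` (release). -/
def R {AP : Type} (φ ψ : LTL AP) : LTL AP := not (untl (not φ) (not ψ))

end LTL

/-- The `k`-th suffix of an infinite word. -/
def suffix {AP : Type} (w : ℕ → Set AP) (k : ℕ) : ℕ → Set AP :=
  fun i => w (i + k)

/-- Concatenation of a finite word `u` with an infinite word `w`. -/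
def cat {AP : Type} (u : List (Set AP)) (w : ℕ → Set AP) : ℕ → Set AP :=
  fun i => if h : i < u.length then u.get ⟨i, h⟩ else w (i - u.length)

/-- Satisfaction relation `w ⊨ φ` of LTL over infinite words `w : ℕ → Set AP`. -/
def Sat {AP : Type} : LTL AP → (ℕ → Set AP) → Prop
  | .tt, _ => True
  | .atom a, w => a ∈ w 0
  | .not φ, w => ¬ Sat φ w
  | .or φ ψ, w => Sat φ w ∨ Sat ψ w
  | .and φ ψ, w => Sat φ w ∧ Sat ψ w
  | .next φ, w => Sat φ (suffix w 1)
  | .untl φ ψ, w => ∃ i, Sat ψ (suffix w i) ∧ ∀ j < i, Sat φ (suffix w j)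

/-- Pure eventuality formulae: μ ::= Fφ | μ∨μ | μ∧μ | Xμ | φUμ | μRμ | Gμ. -/
inductive PureEventuality {AP : Type} : LTL AP → Prop
  | fin (φ : LTL AP) : PureEventuality (LTL.F φ)
  | or {μ₁ μ₂ : LTL AP} : PureEventuality μ₁ → PureEventuality μ₂ →
      PureEventuality (LTL.or μ₁ μ₂)
  | and {μ₁ μ₂ : LTL AP} : PureEventuality μ₁ → PureEventuality μ₂ →
      PureEventuality (LTL.and μ₁ μ₂)
  | next {μ : LTL AP} : PureEventuality μ → PureEventuality (LTL.next μ)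
  | untl (φ : LTL AP) {μ : LTL AP} : PureEventuality μ →
      PureEventuality (LTL.untl φ μ)
  | rel {μ₁ μ₂ : LTL AP} : PureEventuality μ₁ → PureEventuality μ₂ →
      PureEventuality (LTL.R μ₁ μ₂)
  | glob {μ : LTL AP} : PureEventuality μ → PureEventuality (LTL.G μ)

/-- Pure universality formulae: ν ::= Gφ | ν∨ν | ν∧ν | Xν | νUν | φRν | Fν. -/
inductive PureUniversality {AP : Type} : LTL AP → Prop
  | glob (φ : LTL AP) : PureUniversality (LTL.G φ)
  | or {ν₁ ν₂ : LTL AP} : PureUniversality ν₁ → PureUniversality ν₂ →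
      PureUniversality (LTL.or ν₁ ν₂)
  | and {ν₁ ν₂ : LTL AP} : PureUniversality ν₁ → PureUniversality ν₂ →
      PureUniversality (LTL.and ν₁ ν₂)
  | next {ν : LTL AP} : PureUniversality ν → PureUniversality (LTL.next ν)
  | untl {ν₁ ν₂ : LTL AP} : PureUniversality ν₁ → PureUniversality ν₂ →
      PureUniversality (LTL.untl ν₁ ν₂)
  | rel (φ : LTL AP) {ν : LTL AP} : PureUniversality ν →
      PureUniversality (LTL.R φ ν)
  | fin {ν : LTL AP} : PureUniversality ν → PureUniversality (LTL.F ν)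

/-- Alternating formulae: ξ ::= Gμ | Fν | ξ∨ξ | ξ∧ξ | Xξ | φUξ | φRξ | Fξ | Gξ. -/
inductive Alternating {AP : Type} : LTL AP → Prop
  | globEv {μ : LTL AP} : PureEventuality μ → Alternating (LTL.G μ)
  | finUniv {ν : LTL AP} : PureUniversality ν → Alternating (LTL.F ν)
  | or {ξ₁ ξ₂ : LTL AP} : Alternating ξ₁ → Alternating ξ₂ →
      Alternating (LTL.or ξ₁ ξ₂)
  | and {ξ₁ ξ₂ : LTL AP} : Alternating ξ₁ → Alternating ξ₂ →
      Alternating (LTL.and ξ₁ ξ₂)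
  | next {ξ : LTL AP} : Alternating ξ → Alternating (LTL.next ξ)
  | untl (φ : LTL AP) {ξ : LTL AP} : Alternating ξ → Alternating (LTL.untl φ ξ)
  | rel (φ : LTL AP) {ξ : LTL AP} : Alternating ξ → Alternating (LTL.R φ ξ)
  | fin {ξ : LTL AP} : Alternating ξ → Alternating (LTL.F ξ)
  | glob {ξ : LTL AP} : Alternating ξ → Alternating (LTL.G ξ)

lemma suffix_zero {AP : Type} (w : ℕ → Set AP) : suffix w 0 = w := by
  funext i; simp [suffix]

lemma suffix_suffix {AP : Type} (w : ℕ → Set AP) (k i : ℕ) :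
    suffix (suffix w k) i = suffix w (i + k) := by
  funext j; simp [suffix, Nat.add_assoc]

lemma sat_G_iff {AP : Type} (φ : LTL AP) (w : ℕ → Set AP) :
    Sat (LTL.G φ) w ↔ ∀ i, Sat φ (suffix w i) := by
  simp [LTL.G, LTL.F, Sat]

lemma sat_F_iff {AP : Type} (φ : LTL AP) (w : ℕ → Set AP) :
    Sat (LTL.F φ) w ↔ ∃ i, Sat φ (suffix w i) := by
  simp [LTL.F, Sat]

lemma pe_shift {AP : Type} {μ : LTL AP} (h : PureEventuality μ) :
    ∀ (w : ℕ → Set AP) (k : ℕ), Sat μ (suffix w k) → Sat μ w := by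
  induction h with
  | fin φ =>
      intro w k hs
      rw [sat_F_iff] at hs ⊢
      obtain ⟨i, hi⟩ := hs
      exact ⟨i + k, by rwa [suffix_suffix] at hi⟩
  | or h₁ h₂ ih₁ ih₂ =>
      intro w k hs
      rcases hs with hs | hs
      · exact Or.inl (ih₁ w k hs)
      · exact Or.inr (ih₂ w k hs)
  | and h₁ h₂ ih₁ ih₂ =>
      intro w k hs
      exact ⟨ih₁ w k hs.1, ih₂ w k hs.2⟩
  | @next μ h ih =>
      intro w k hs
      show Sat μ (suffix w 1)
      apply ih (suffix w 1) k
      rw [suffix_suffix, Nat.add_comm]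
      have hs' : Sat μ (suffix (suffix w k) 1) := hs
      rwa [suffix_suffix] at hs'
  | untl φ h ih =>
      intro w k hs
      obtain ⟨i, hi, _⟩ := hs
      rw [suffix_suffix] at hi
      refine ⟨0, ?_, by omega⟩
      rw [suffix_zero]
      exact ih w (i + k) hi
  | rel h₁ h₂ ih₁ ih₂ =>
      intro w k hs
      simp only [LTL.R, Sat] at hs ⊢
      rintro ⟨i, h2, h1⟩
      apply hs
      by_cases hik : k ≤ i
      · refine ⟨i - k, ?_, ?_⟩
        · rw [suffix_suffix, Nat.sub_add_cancel hik]; exact h2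
        · intro j hj
          rw [suffix_suffix]
          exact h1 (j + k) (by omega)
      · refine ⟨0, ?_, by omega⟩
        rw [suffix_zero]
        intro hk
        apply h2
        apply ih₂ (suffix w i) (k - i)
        rw [suffix_suffix, Nat.sub_add_cancel (by omega)]
        exact hk
  | glob h ih =>
      intro w k hs
      rw [sat_G_iff] at hs ⊢
      intro i
      apply ih (suffix w i) k
      rw [suffix_suffix, Nat.add_comm]
      have := hs i
      rwa [suffix_suffix] at this

lemma pu_shift {AP : Type} {ν : LTL AP} (h : PureUniversality ν) :
    ∀ (w : ℕ → Set AP) (k : ℕ), Sat ν w → Sat ν (suffix w k) := by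
  induction h with
  | glob φ =>
      intro w k hs
      rw [sat_G_iff] at hs ⊢
      intro i
      rw [suffix_suffix]
      exact hs (i + k)
  | or h₁ h₂ ih₁ ih₂ =>
      intro w k hs
      rcases hs with hs | hs
      · exact Or.inl (ih₁ w k hs)
      · exact Or.inr (ih₂ w k hs)
  | and h₁ h₂ ih₁ ih₂ =>
      intro w k hs
      exact ⟨ih₁ w k hs.1, ih₂ w k hs.2⟩
  | @next ν h ih =>
      intro w k hs
      show Sat ν (suffix (suffix w k) 1)
      rw [suffix_suffix, Nat.add_comm]
      have := ih (suffix w 1) k hs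
      rwa [suffix_suffix] at this
  | untl h₁ h₂ ih₁ ih₂ =>
      intro w k hs
      obtain ⟨i, hi, hj⟩ := hs
      refine ⟨i, ?_, ?_⟩
      · rw [suffix_suffix]
        have := ih₂ (suffix w i) k hi
        rwa [suffix_suffix, Nat.add_comm] at this
      · intro j hj'
        rw [suffix_suffix]
        have := ih₁ (suffix w j) k (hj j hj')
        rwa [suffix_suffix, Nat.add_comm] at this
  | rel φ h ih =>
      intro w k hs
      simp only [LTL.R, Sat] at hs ⊢
      rintro ⟨i, h2, h1⟩
      apply hs
      refine ⟨0, ?_, by omega⟩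
      rw [suffix_zero]
      intro hw
      apply h2
      have := ih w (i + k) hw
      rwa [suffix_suffix]
  | fin h ih =>
      intro w k hs
      rw [sat_F_iff] at hs ⊢
      obtain ⟨i, hi⟩ := hs
      refine ⟨i, ?_⟩
      rw [suffix_suffix]
      have := ih (suffix w i) k hi
      rwa [suffix_suffix, Nat.add_comm] at this

lemma alt_shift {AP : Type} {ξ : LTL AP} (h : Alternating ξ) :
    ∀ (w : ℕ → Set AP) (k : ℕ), Sat ξ (suffix w k) ↔ Sat ξ w := by
  induction h with
  | globEv hμ =>
      intro w k
      rw [sat_G_iff, sat_G_iff]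
      constructor
      · intro hs i
        apply pe_shift hμ (suffix w i) k
        rw [suffix_suffix, Nat.add_comm]
        have := hs i
        rwa [suffix_suffix] at this
      · intro hs i
        rw [suffix_suffix]
        exact hs (i + k)
  | finUniv hν =>
      intro w k
      rw [sat_F_iff, sat_F_iff]
      constructor
      · rintro ⟨i, hi⟩
        rw [suffix_suffix] at hi
        exact ⟨i + k, hi⟩
      · rintro ⟨i, hi⟩
        refine ⟨i, ?_⟩
        rw [suffix_suffix]
        have := pu_shift hν (suffix w i) k hi
        rwa [suffix_suffix, Nat.add_comm] at this
  | or h₁ h₂ ih₁ ih₂ =>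
      intro w k
      exact or_congr (ih₁ w k) (ih₂ w k)
  | and h₁ h₂ ih₁ ih₂ =>
      intro w k
      exact and_congr (ih₁ w k) (ih₂ w k)
  | @next ξ h ih =>
      intro w k
      show Sat ξ (suffix (suffix w k) 1) ↔ Sat ξ (suffix w 1)
      rw [suffix_suffix, Nat.add_comm, ← suffix_suffix]
      exact ih (suffix w 1) k
  | @untl φ ξ h ih =>
      intro w k
      have key : ∀ v : ℕ → Set AP, Sat (LTL.untl φ ξ) v ↔ Sat ξ v := by
        intro v
        constructor
        · rintro ⟨i, hi, _⟩
          exact (ih v i).mp hi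
        · intro hv
          exact ⟨0, by rwa [suffix_zero], by omega⟩
      rw [key, key]
      exact ih w k
  | @rel φ ξ h ih =>
      intro w k
      have key : ∀ v : ℕ → Set AP, Sat (LTL.R φ ξ) v ↔ Sat ξ v := by
        intro v
        simp only [LTL.R, Sat]
        constructor
        · intro hv
          by_contra hc
          exact hv ⟨0, by rwa [suffix_zero], by omega⟩
        · rintro hv ⟨i, h2, _⟩
          exact h2 ((ih v i).mpr hv)
      rw [key, key]
      exact ih w k
  | @fin ξ h ih =>
      intro w k
      have key : ∀ v : ℕ → Set AP, Sat (LTL.F ξ) v ↔ Sat ξ v := by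
        intro v
        rw [sat_F_iff]
        constructor
        · rintro ⟨i, hi⟩
          exact (ih v i).mp hi
        · intro hv
          exact ⟨0, by rwa [suffix_zero]⟩
      rw [key, key]
      exact ih w k
  | @glob ξ h ih =>
      intro w k
      have key : ∀ v : ℕ → Set AP, Sat (LTL.G ξ) v ↔ Sat ξ v := by
        intro v
        rw [sat_G_iff]
        constructor
        · intro hv
          have := hv 0
          rwa [suffix_zero] at this
        · intro hv i
          exact (ih v i).mpr hv
      rw [key, key]
      exact ih w k

theorem until_suspension_identity :
    ∀ (AP : Type) (φ₁ φ₂ : LTL AP), Alternating φ₁ →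
      ∀ w : ℕ → Set AP,
        Sat (LTL.untl φ₁ φ₂) w ↔
          Sat (LTL.or φ₂ (LTL.and (LTL.next φ₁) (LTL.next (LTL.untl φ₁ φ₂)))) w := by
  intro AP φ₁ φ₂ halt w
  have inv := alt_shift halt
  constructor
  · rintro ⟨i, hi, hj⟩
    cases i with
    | zero =>
        left
        rwa [suffix_zero] at hi
    | succ i' =>
        right
        constructor
        · show Sat φ₁ (suffix w 1)
          rw [inv w 1]
          have := hj 0 (Nat.succ_pos _)
          rwa [suffix_zero] at this
        · refine ⟨i', ?_, ?_⟩
          · rwa [suffix_suffix]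
          · intro j hjlt
            rw [suffix_suffix]
            exact hj (j + 1) (by omega)
  · rintro (h2 | ⟨h1, i, hi, hj⟩)
    · exact ⟨0, by rwa [suffix_zero], by omega⟩
    · rw [suffix_suffix] at hi
      refine ⟨i + 1, hi, ?_⟩
      intro j hjlt
      cases j with
      | zero =>
          rw [suffix_zero, ← inv w 1]
          exact h1
      | succ j' =>
          have := hj j' (by omega)
          rwa [suffix_suffix] at this
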